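/- arXiv:2504.19349 — 5 statements merged into one kernel-verified Lean document; each statement's English description precedes it below -/
import Mathlib

section
/- If A is an invertible 3×3 complex matrix with AᵀA = αI₃ and Aᵀ·Λ·A = β·Λ where Λ = diag(λ₁,λ₂,λ₃) has distinct diagonal entries and α, β are nonzero scalars, then there exists a permutation σ ∈ S₃ and scalars μ₁, μ₂, μ₃ with μᵢ² = α such that A·eᵢ = μᵢ·e_{σ(i)} for i = 1, 2, 3, and (β/α)·λᵢ = λ_{σ(i)} for all i. -/
open Matrix

/-- If `AᵀA = α I` and `Aᵀ Λ A = β Λ` with `Λ = diag (λ₁,λ₂,λ₃)` having distinct entries,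
then `A` is a scaled permutation matrix: `A eᵢ = μᵢ e_{σ(i)}` with `μᵢ² = α`, and
`(β/α) λᵢ = λ_{σ(i)}`. -/
theorem isotropy_matrix_structure
    (A : Matrix (Fin 3) (Fin 3) ℂ) (hA : IsUnit A.det)
    (l : Fin 3 → ℂ) (hdist : ∀ i j : Fin 3, i ≠ j → l i ≠ l j)
    (α β : ℂ) (hα : α ≠ 0) (hβ : β ≠ 0)
    (h1 : Aᵀ * A = α • (1 : Matrix (Fin 3) (Fin 3) ℂ))
    (h2 : Aᵀ * Matrix.diagonal l * A = β • Matrix.diagonal l) :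
    ∃ σ : Equiv.Perm (Fin 3), ∃ μ : Fin 3 → ℂ,
      (∀ i, μ i ^ 2 = α) ∧
      (∀ i, A.mulVec (Pi.single i 1) = μ i • (Pi.single (σ i) 1 : Fin 3 → ℂ)) ∧
      (∀ i, (β / α) * l i = l (σ i)) := by
  -- Right inverse: A * Aᵀ = α • 1
  have hBA : (α⁻¹ • Aᵀ) * A = 1 := by
    rw [Matrix.smul_mul, h1, smul_smul, inv_mul_cancel₀ hα, one_smul]
  have hAB : A * (α⁻¹ • Aᵀ) = 1 := mul_eq_one_comm.mp hBA
  have hAAT : A * Aᵀ = α • (1 : Matrix (Fin 3) (Fin 3) ℂ) := by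
    have := congrArg (fun M => (α : ℂ) • M) hAB
    simpa [Matrix.mul_smul, smul_smul, mul_inv_cancel₀ hα] using this
  -- α • (Λ A) = β • (A Λ)
  have h3 : α • (Matrix.diagonal l * A) = β • (A * Matrix.diagonal l) := by
    have h5 := congrArg (fun M => A * M) h2
    simp only [Matrix.mul_smul] at h5
    calc α • (Matrix.diagonal l * A)
        = (α • (1 : Matrix (Fin 3) (Fin 3) ℂ)) * (Matrix.diagonal l * A) := by
          rw [Matrix.smul_mul, Matrix.one_mul]
      _ = A * (Aᵀ * Matrix.diagonal l * A) := by rw [← hAAT]; noncomm_ring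
      _ = β • (A * Matrix.diagonal l) := h5
  have key : ∀ i j, A i j ≠ 0 → α * l i = β * l j := by
    intro i j h
    have h4 := congrFun (congrFun h3 i) j
    simp only [Matrix.smul_apply, Matrix.diagonal_mul, Matrix.mul_diagonal,
      smul_eq_mul] at h4
    apply mul_right_cancel₀ h
    linear_combination h4
  have horth : ∀ j k, ∑ i, A i j * A i k = α * (if j = k then 1 else 0) := by
    intro j k
    have h4 := congrFun (congrFun h1 j) k
    simpa [Matrix.mul_apply, Matrix.transpose_apply, Matrix.one_apply,
      Matrix.smul_apply, smul_eq_mul] using h4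
  have hex : ∀ j, ∃ i, A i j ≠ 0 := by
    intro j
    by_contra hc
    push_neg at hc
    have := horth j j
    simp [hc] at this
    exact hα this.symm
  have huniq : ∀ j i i', A i j ≠ 0 → A i' j ≠ 0 → i = i' := by
    intro j i i' h h'
    by_contra hne
    have e1 := key i j h
    have e2 := key i' j h'
    exact hdist i i' hne (mul_left_cancel₀ hα (e1.trans e2.symm))
  set f : Fin 3 → Fin 3 := fun j => (hex j).choose with hf
  have hfne : ∀ j, A (f j) j ≠ 0 := fun j => (hex j).choose_spec
  have hzero : ∀ j i, i ≠ f j → A i j = 0 := by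
    intro j i h
    by_contra hc
    exact h (huniq j i (f j) hc (hfne j))
  have hinj : Function.Injective f := by
    intro j k hjk
    by_contra hne
    have h4 := horth j k
    rw [if_neg hne, mul_zero] at h4
    rw [Finset.sum_eq_single (f j)] at h4
    · rw [hjk] at h4
      exact mul_ne_zero (hjk ▸ hfne j) (hfne k) h4
    · intro i _ hi
      rw [hzero j i hi, zero_mul]
    · intro h; exact absurd (Finset.mem_univ _) h
  refine ⟨Equiv.ofBijective f (Finite.injective_iff_bijective.mp hinj),
    fun j => A (f j) j, ?_, ?_, ?_⟩
  · intro j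
    have h4 := horth j j
    rw [if_pos rfl, mul_one] at h4
    rw [Finset.sum_eq_single (f j)] at h4
    · rw [← h4]; ring
    · intro i _ hi
      rw [hzero j i hi, zero_mul]
    · intro h; exact absurd (Finset.mem_univ _) h
  · intro j
    funext i
    have hcol : A.mulVec (Pi.single j 1) i = A i j := by
      simp [Matrix.mulVec, dotProduct, Pi.single_apply]
    rw [hcol]
    simp only [Pi.smul_apply, Equiv.ofBijective_apply, smul_eq_mul, Pi.single_apply]
    by_cases h : i = f j
    · subst h; simp
    · rw [hzero j i h, if_neg h, mul_zero]
  · intro j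
    have := key (f j) j (hfne j)
    simp only [Equiv.ofBijective_apply]
    field_simp
    linear_combination -this
end

section
/- Let C, D be invertible 3×3 complex symmetric matrices, λ a simple root of P(x) = det(xC + D), and v a nonzero vector with (λC + D)v = 0. If the conics defined by C and D intersect transversely (equivalently, P has three distinct roots), then vᵀCv ≠ 0. -/
open Matrix

/-- rank-1 matrices have zero adjugate (3×3). -/
lemma adj_zero_of_rank_one (A : Matrix (Fin 3) (Fin 3) ℂ) (t w : Fin 3 → ℂ)
    (h : ∀ i j, A i j = t i * w j) : adjugate A = 0 := by
  rw [adjugate_fin_three]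
  ext i j
  fin_cases i <;> fin_cases j <;> simp [h] <;> ring

lemma cross_all (x w : Fin 3 → ℂ)
    (h01 : x 0 * w 1 = x 1 * w 0) (h02 : x 0 * w 2 = x 2 * w 0)
    (h12 : x 1 * w 2 = x 2 * w 1) : ∀ i j, x i * w j = x j * w i := by
  intro i j
  fin_cases i <;> fin_cases j <;>
    first | rfl | exact h01 | exact h01.symm | exact h02 | exact h02.symm
          | exact h12 | exact h12.symm

lemma prop3 (x w : Fin 3 → ℂ) (h : ∀ i j, x i * w j = x j * w i)
    (k : Fin 3) (hk : w k ≠ 0) : ∀ j, x j = (x k / w k) * w j := by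
  intro j
  field_simp
  linear_combination h j k

set_option maxHeartbeats 2000000 in
/-- det expansion for `X + s•Y` in 3×3. -/
lemma det_add_smul_expand (X Y : Matrix (Fin 3) (Fin 3) ℂ) (s : ℂ) :
    (X + s • Y).det = X.det + s * (adjugate X * Y).trace
      + s ^ 2 * (adjugate Y * X).trace + s ^ 3 * Y.det := by
  simp [det_fin_three, adjugate_fin_three, trace_fin_three, mul_apply,
    Fin.sum_univ_three, vecMul, dotProduct]
  ring

/-- If the conics given by invertible symmetric matrices `C`, `D` intersect transversely
(i.e. `det (xC + D)` has three distinct roots), `λ` is one of these (simple) roots and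
`v ≠ 0` satisfies `(λC + D)v = 0`, then `vᵀ C v ≠ 0`. -/
theorem transversality_vCv_ne_zero
    (C D : Matrix (Fin 3) (Fin 3) ℂ)
    (hC : Cᵀ = C) (hD : Dᵀ = D) (hCu : IsUnit C.det) (hDu : IsUnit D.det)
    (r1 r2 r3 : ℂ) (h12 : r1 ≠ r2) (h13 : r1 ≠ r3) (h23 : r2 ≠ r3)
    (hroots : ∀ t : ℂ, (t • C + D).det = C.det * (t - r1) * (t - r2) * (t - r3))
    (lam : ℂ) (hlam : lam = r1 ∨ lam = r2 ∨ lam = r3)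
    (v : Fin 3 → ℂ) (hv : v ≠ 0) (hker : (lam • C + D).mulVec v = 0) :
    v ⬝ᵥ C.mulVec v ≠ 0 := by
  set A : Matrix (Fin 3) (Fin 3) ℂ := lam • C + D with hA
  have hCd : C.det ≠ 0 := hCu.ne_zero
  -- det A = 0
  have hdetA : A.det = 0 := by
    rw [hA, hroots lam]
    rcases hlam with h | h | h <;> subst h <;> ring
  -- the coefficient identity
  have heq : ∀ s : ℂ, A.det + s * (adjugate A * C).trace
      + s ^ 2 * (adjugate C * A).trace + s ^ 3 * C.det
      = C.det * (lam + s - r1) * (lam + s - r2) * (lam + s - r3) := by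
    intro s
    rw [← det_add_smul_expand A C s]
    have h2 : A + s • C = (lam + s) • C + D := by rw [hA]; module
    rw [h2, hroots (lam + s)]
  -- extract s-coefficient
  have hT1eq : (adjugate A * C).trace
      = C.det * ((lam - r1) * (lam - r2) + (lam - r1) * (lam - r3)
          + (lam - r2) * (lam - r3)) := by
    have e1 := heq 1; have e2 := heq (-1); have e3 := heq 2; have e4 := heq (-2)
    linear_combination (2/3 : ℂ) * e1 - (2/3 : ℂ) * e2 - (1/12 : ℂ) * e3 + (1/12 : ℂ) * e4
  have hT1ne : (adjugate A * C).trace ≠ 0 := by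
    rw [hT1eq]
    rcases hlam with h | h | h <;> rw [h]
    · have e : (r1 - r1) * (r1 - r2) + (r1 - r1) * (r1 - r3) + (r1 - r2) * (r1 - r3)
          = (r1 - r2) * (r1 - r3) := by ring
      rw [e]
      exact mul_ne_zero hCd (mul_ne_zero (sub_ne_zero.mpr h12) (sub_ne_zero.mpr h13))
    · have e : (r2 - r1) * (r2 - r2) + (r2 - r1) * (r2 - r3) + (r2 - r2) * (r2 - r3)
          = (r2 - r1) * (r2 - r3) := by ring
      rw [e]
      exact mul_ne_zero hCd (mul_ne_zero (sub_ne_zero.mpr (Ne.symm h12)) (sub_ne_zero.mpr h23))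
    · have e : (r3 - r1) * (r3 - r2) + (r3 - r1) * (r3 - r3) + (r3 - r2) * (r3 - r3)
          = (r3 - r1) * (r3 - r2) := by ring
      rw [e]
      exact mul_ne_zero hCd (mul_ne_zero (sub_ne_zero.mpr (Ne.symm h13)) (sub_ne_zero.mpr (Ne.symm h23)))
  -- adjugate A ≠ 0
  have hadjne : adjugate A ≠ 0 := by
    intro h
    rw [h, Matrix.zero_mul, trace_zero] at hT1ne
    exact hT1ne rfl
  -- A is symmetric
  have hAsym : Aᵀ = A := by rw [hA, transpose_add, transpose_smul, hC, hD]
  -- every kernel vector is a multiple of v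
  have hker1 : ∀ u : Fin 3 → ℂ, A.mulVec u = 0 → ∃ c : ℂ, ∀ i, u i = c * v i := by
    intro u hu
    by_cases hcp : ∀ i j, u i * v j = u j * v i
    · obtain ⟨i0, hi0⟩ := Function.ne_iff.mp hv
      exact ⟨u i0 / v i0, prop3 u v hcp i0 hi0⟩
    · exfalso
      push_neg at hcp
      obtain ⟨i, j, hij⟩ := hcp
      set w : Fin 3 → ℂ := ![u 1 * v 2 - u 2 * v 1, u 2 * v 0 - u 0 * v 2,
        u 0 * v 1 - u 1 * v 0] with hw
      have hw0 : w 0 = u 1 * v 2 - u 2 * v 1 := rfl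
      have hw1 : w 1 = u 2 * v 0 - u 0 * v 2 := rfl
      have hw2 : w 2 = u 0 * v 1 - u 1 * v 0 := rfl
      have hwk : ∃ k, w k ≠ 0 := by
        by_contra hall
        push_neg at hall
        have a01 : u 0 * v 1 = u 1 * v 0 := by
          have h := hall 2; rw [hw2] at h; linear_combination h
        have a02 : u 0 * v 2 = u 2 * v 0 := by
          have h := hall 1; rw [hw1] at h; linear_combination -h
        have a12 : u 1 * v 2 = u 2 * v 1 := by
          have h := hall 0; rw [hw0] at h; linear_combination h
        exact hij (cross_all u v a01 a02 a12 i j)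
      obtain ⟨k, hk⟩ := hwk
      have hrowu : ∀ p, A p 0 * u 0 + A p 1 * u 1 + A p 2 * u 2 = 0 := by
        intro p
        have := congrFun hu p
        simpa [mulVec, dotProduct, Fin.sum_univ_three] using this
      have hrowv : ∀ p, A p 0 * v 0 + A p 1 * v 1 + A p 2 * v 2 = 0 := by
        intro p
        have := congrFun hker p
        simpa [mulVec, dotProduct, Fin.sum_univ_three, ← hA] using this
      have hrows : ∀ p, ∀ a b : Fin 3, A p a * w b = A p b * w a := by
        intro p
        apply cross_all
        · rw [hw0, hw1]
          first
            | linear_combination (u 2) * hrowv p - (v 2) * hrowu p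
            | linear_combination (v 2) * hrowu p - (u 2) * hrowv p
        · rw [hw0, hw2]
          first
            | linear_combination (u 1) * hrowv p - (v 1) * hrowu p
            | linear_combination (v 1) * hrowu p - (u 1) * hrowv p
        · rw [hw1, hw2]
          first
            | linear_combination (u 0) * hrowv p - (v 0) * hrowu p
            | linear_combination (v 0) * hrowu p - (u 0) * hrowv p
      exact hadjne (adj_zero_of_rank_one A (fun p => A p k / w k) w
        (fun p q => prop3 (fun a => A p a) w (hrows p) k hk q))
  -- columns of adjugate A are kernel vectors
  have hcols : ∀ j, A.mulVec (fun i => adjugate A i j) = 0 := by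
    intro j
    have h0 : A * adjugate A = 0 := by rw [mul_adjugate, hdetA, zero_smul]
    funext i
    have := congrFun (congrFun h0 i) j
    simpa [mulVec, dotProduct, mul_apply] using this
  choose c hc using fun j => hker1 _ (hcols j)
  -- symmetry of adjugate A
  have hadjsymT : (adjugate A)ᵀ = adjugate A := by
    rw [adjugate_transpose, hAsym]
  have hadjsym : ∀ i j, adjugate A i j = adjugate A j i := by
    intro i j
    exact congrFun (congrFun hadjsymT j) i
  obtain ⟨i0, hi0⟩ := Function.ne_iff.mp hv
  simp only [Pi.zero_apply] at hi0
  set kk : ℂ := c i0 / v i0 with hkk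
  have hcj : ∀ j, c j = kk * v j := by
    intro j
    have h1 : c j * v i0 = c i0 * v j := by
      have := hadjsym i0 j
      rw [hc j i0, hc i0 j] at this
      linear_combination this
    rw [hkk]
    field_simp
    linear_combination h1
  have hadj : ∀ i j, adjugate A i j = kk * v j * v i := by
    intro i j
    rw [hc j i, hcj j]
  -- trace identity
  have htr : (adjugate A * C).trace = kk * (v ⬝ᵥ C.mulVec v) := by
    simp only [trace_fin_three, mul_apply, Fin.sum_univ_three, mulVec, dotProduct, hadj]
    ring
  intro hvCv
  rw [htr, hvCv, mul_zero] at hT1ne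
  exact hT1ne rfl
end

section
/- The polynomial Q(λ₁,λ₂,λ₃) = -λ₁²λ₂² + 2λ₁²λ₂λ₃ - λ₁²λ₃² + 2λ₁λ₂²λ₃ + 2λ₁λ₂λ₃² - λ₂²λ₃² is irreducible in ℂ[λ₁,λ₂,λ₃]. -/
/-!
Single out `λ₁`: over `R = ℂ[λ₂, λ₃]` the polynomial `Q` is the quadratic
`a λ₁² + b λ₁ + c` with `a = -(λ₂ - λ₃)²`, `b = 2 λ₂ λ₃ (λ₂ + λ₃)`, `c = -(λ₂ λ₃)²`.
It is primitive because `λ₂ - λ₃` shares no prime factor with `λ₂ λ₃`, so by Gauss's lemma it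
suffices that it has no root in `Frac R`, i.e. that its discriminant `(4 λ₂ λ₃)² · λ₂ λ₃` is not a
square there. Since `R` is integrally closed, that would make `λ₂ λ₃` a square in `R`, which it
is not: the prime `λ₂` divides it exactly once.
-/

open MvPolynomial

theorem IsSquare.of_sq_mul {G : Type*} [CommGroupWithZero G] {d e : G} (he : e ≠ 0)
    (h : IsSquare (e ^ 2 * d)) : IsSquare d := by
  simpa [he] using h.div (IsSquare.sq e)

theorem Prime.not_isSquare_of_not_sq_dvd {M : Type*} [CommMonoidWithZero M] {p a : M}
    (hp : Prime p) (hpa : p ∣ a) (hpa2 : ¬ p ^ 2 ∣ a) : ¬ IsSquare a := by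
  rintro ⟨r, rfl⟩
  have hpr : p ∣ r := (hp.dvd_or_dvd hpa).elim id id
  exact hpa2 (sq p ▸ mul_dvd_mul hpr hpr)

namespace IsIntegrallyClosed

variable {R : Type*} [CommRing R] [IsIntegrallyClosed R]

theorem isSquare_algebraMap_iff (K : Type*) [Field K] [Algebra R K] [IsFractionRing R K]
    {d : R} : IsSquare (algebraMap R K d) ↔ IsSquare d := by
  refine ⟨fun ⟨s, hs⟩ ↦ ?_, fun h ↦ h.map (algebraMap R K)⟩
  obtain ⟨v, rfl⟩ := exists_algebraMap_eq_of_isIntegral_pow (R := R) (x := s) two_pos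
    (by rw [sq, ← hs]; exact isIntegral_algebraMap)
  exact ⟨v, IsFractionRing.injective R K (by rw [hs, map_mul])⟩

theorem isSquare_of_isSquare_sq_mul [IsDomain R] {d e : R} (he : e ≠ 0)
    (h : IsSquare (e ^ 2 * d)) : IsSquare d := by
  rw [← isSquare_algebraMap_iff (FractionRing R)] at h ⊢
  rw [map_mul, map_pow] at h
  exact h.of_sq_mul ((map_ne_zero_iff _ (IsFractionRing.injective R _)).mpr he)

end IsIntegrallyClosed

namespace Polynomial

theorem irreducible_quadratic_of_forall_discrim_ne_sq {K : Type*} [Field K] {a b c : K}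
    (ha : a ≠ 0) (h : ∀ s : K, discrim a b c ≠ s ^ 2) :
    Irreducible (C a * X ^ 2 + C b * X + C c) :=
  irreducible_of_degree_le_three_of_not_isRoot (by simp [natDegree_quadratic ha])
    fun x hx ↦ quadratic_ne_zero_of_discrim_ne_sq h x (by simpa [sq] using hx)

theorem isPrimitive_of_isRelPrime_coeff {R : Type*} [CommSemiring R] {p : R[X]} {i j : ℕ}
    (h : IsRelPrime (p.coeff i) (p.coeff j)) : p.IsPrimitive :=
  fun r hr ↦ h ((C_dvd_iff_dvd_coeff r p).mp hr i) ((C_dvd_iff_dvd_coeff r p).mp hr j)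

theorem irreducible_quadratic_of_isRelPrime_of_not_isSquare {R : Type*} [CommRing R]
    [IsDomain R] [IsIntegrallyClosed R] {a b c : R} (ha : a ≠ 0) (hac : IsRelPrime a c)
    (hd : ¬ IsSquare (discrim a b c)) :
    Irreducible (C a * X ^ 2 + C b * X + C c) := by
  have hprim : (C a * X ^ 2 + C b * X + C c).IsPrimitive :=
    isPrimitive_of_isRelPrime_coeff (i := 2) (j := 0) (by simpa using hac)
  refine hprim.irreducible_of_irreducible_map_of_injective
    (IsFractionRing.injective R (FractionRing R)) ?_
  simp only [Polynomial.map_add, Polynomial.map_mul, Polynomial.map_pow, map_C, map_X]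
  refine irreducible_quadratic_of_forall_discrim_ne_sq
    ((map_ne_zero_iff _ (IsFractionRing.injective R _)).mpr ha) fun s hs ↦ hd ?_
  rw [← IsIntegrallyClosed.isSquare_algebraMap_iff (FractionRing R)]
  exact ⟨s, by rw [← sq, ← hs]; simp only [discrim, map_sub, map_mul, map_pow, map_ofNat]⟩

end Polynomial

namespace MvPolynomial

variable {σ R : Type*} [CommRing R] [IsDomain R] {i j : σ}

theorem isRelPrime_X_sub_X_X_mul_X [UniqueFactorizationMonoid R] (hij : i ≠ j) :
    IsRelPrime (X i - X j : MvPolynomial σ R) (X i * X j) := by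
  refine .mul_right ((X_prime.irreducible.isRelPrime_iff_not_dvd).mpr ?_).symm
    ((X_prime.irreducible.isRelPrime_iff_not_dvd).mpr ?_).symm
  · rw [dvd_sub_self_left, X_dvd_X]; exact hij
  · rw [dvd_sub_self_right, X_dvd_X]; exact hij.symm

theorem not_isSquare_X_mul_X (hij : i ≠ j) : ¬ IsSquare (X i * X j : MvPolynomial σ R) :=
  X_prime.not_isSquare_of_not_sq_dvd (dvd_mul_right _ _) (by
    rw [sq, mul_dvd_mul_iff_left (X_ne_zero i), X_dvd_X]; exact hij)

end MvPolynomial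

open Polynomial in
theorem irreducible_cayley_quadratic {σ k : Type*} [Field k] [NeZero (2 : k)] {i j : σ}
    (hij : i ≠ j) :
    Irreducible (.C (-(X i - X j) ^ 2) * .X ^ 2 + .C (2 * X i * X j * (X i + X j)) * .X
      + .C (-(X i * X j) ^ 2) : (MvPolynomial σ k)[X]) := by
  refine irreducible_quadratic_of_isRelPrime_of_not_isSquare
    (neg_ne_zero.mpr (pow_ne_zero _ (sub_ne_zero.mpr (X_injective.ne hij))))
    (isRelPrime_X_sub_X_X_mul_X hij).pow.neg_neg fun hd ↦ not_isSquare_X_mul_X (R := k) hij ?_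
  have h4 : (4 : MvPolynomial σ k) ≠ 0 := by
    rw [← map_ofNat MvPolynomial.C 4, MvPolynomial.C_ne_zero, show (4 : k) = 2 * 2 by norm_num]
    exact mul_ne_zero two_ne_zero two_ne_zero
  refine IsIntegrallyClosed.isSquare_of_isSquare_sq_mul
    (mul_ne_zero (mul_ne_zero h4 (X_ne_zero i)) (X_ne_zero j)) ?_
  convert hd using 1
  unfold discrim
  ring

/-- The Cayley condition polynomial
`Q = -λ₁²λ₂² + 2λ₁²λ₂λ₃ - λ₁²λ₃² + 2λ₁λ₂²λ₃ + 2λ₁λ₂λ₃² - λ₂²λ₃²`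
is irreducible in `ℂ[λ₁,λ₂,λ₃]`. -/
theorem cayley_polynomial_irreducible :
    Irreducible
      (-(X 0 ^ 2 * X 1 ^ 2) + 2 * X 0 ^ 2 * X 1 * X 2 - X 0 ^ 2 * X 2 ^ 2
        + 2 * X 0 * X 1 ^ 2 * X 2 + 2 * X 0 * X 1 * X 2 ^ 2 - X 1 ^ 2 * X 2 ^ 2 :
        MvPolynomial (Fin 3) ℂ) := by
  have hQ : finSuccEquiv ℂ 2
      (-(X 0 ^ 2 * X 1 ^ 2) + 2 * X 0 ^ 2 * X 1 * X 2 - X 0 ^ 2 * X 2 ^ 2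
        + 2 * X 0 * X 1 ^ 2 * X 2 + 2 * X 0 * X 1 * X 2 ^ 2 - X 1 ^ 2 * X 2 ^ 2) =
      .C (-(X 0 - X 1) ^ 2) * .X ^ 2 + .C (2 * X 0 * X 1 * (X 0 + X 1)) * .X
        + .C (-(X 0 * X 1) ^ 2) := by
    rw [show (X 1 : MvPolynomial (Fin 3) ℂ) = X (Fin.succ 0) from rfl,
      show (X 2 : MvPolynomial (Fin 3) ℂ) = X (Fin.succ 1) from rfl]
    simp only [map_add, map_sub, map_neg, map_mul, map_pow, map_ofNat, finSuccEquiv_X_zero,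
      finSuccEquiv_X_succ]
    ring
  rw [← MulEquiv.irreducible_iff (finSuccEquiv ℂ 2), hQ]
  exact irreducible_cayley_quadratic (by decide)
end

section
/- Suppose λ₁, λ₂, λ₃ ∈ ℂ satisfy both Q(λ) = -λ₁²λ₂² + 2λ₁²λ₂λ₃ - λ₁²λ₃² + 2λ₁λ₂²λ₃ + 2λ₁λ₂λ₃² - λ₂²λ₃² = 0 and 256(λ₁² - λ₁λ₂ - λ₁λ₃ + λ₂² - λ₂λ₃ + λ₃²)³ = z·(λ₁-λ₂)²(λ₁-λ₃)²(λ₂-λ₃)² for some z ∈ ℂ. If λ₁ = λ₂, then λ₁ = λ₂ = λ₃ = 0. Similarly, if λ₁ = 0 then λ₂ = λ₃ = 0. -/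
/-- Intersection points of the Cayley curve and a fiber of the j-invariant have
pairwise distinct nonzero coordinates: if `Q(λ) = 0` and
`256 q³ = z·d`, then `λ₁ = λ₂` forces `λ₁ = λ₂ = λ₃ = 0`, and `λ₁ = 0` forces
`λ₂ = λ₃ = 0`. -/
theorem cayley_j_fiber_intersection_nondegenerate
    (l1 l2 l3 z : ℂ)
    (hQ : -(l1 ^ 2 * l2 ^ 2) + 2 * l1 ^ 2 * l2 * l3 - l1 ^ 2 * l3 ^ 2
        + 2 * l1 * l2 ^ 2 * l3 + 2 * l1 * l2 * l3 ^ 2 - l2 ^ 2 * l3 ^ 2 = 0)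
    (hfib : 256 * (l1 ^ 2 - l1 * l2 - l1 * l3 + l2 ^ 2 - l2 * l3 + l3 ^ 2) ^ 3
        = z * ((l1 - l2) ^ 2 * (l1 - l3) ^ 2 * (l2 - l3) ^ 2)) :
    (l1 = l2 → l1 = 0 ∧ l2 = 0 ∧ l3 = 0) ∧
    (l1 = 0 → l2 = 0 ∧ l3 = 0) := by
  constructor
  · rintro rfl
    have h1 : l1 ^ 3 * (4 * l3 - l1) = 0 := by linear_combination hQ
    rcases mul_eq_zero.mp h1 with h | h
    · have hl1 : l1 = 0 := by
        have := pow_eq_zero_iff (n := 3) (by norm_num) |>.mp h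
        exact this
      subst hl1
      have h2 : l3 ^ 6 = 0 := by linear_combination (1/256 : ℂ) * hfib
      have hl3 : l3 = 0 := by
        have := pow_eq_zero_iff (n := 6) (by norm_num) |>.mp h2
        exact this
      exact ⟨rfl, rfl, hl3⟩
    · have hl1 : l1 = 4 * l3 := by linear_combination -h
      subst hl1
      have h2 : l3 ^ 6 = 0 := by linear_combination (1/186624 : ℂ) * hfib
      have hl3 : l3 = 0 := by
        have := pow_eq_zero_iff (n := 6) (by norm_num) |>.mp h2
        exact this
      subst hl3
      norm_num
  · rintro rfl
    have h1 : l2 ^ 2 * l3 ^ 2 = 0 := by linear_combination -hQ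
    rcases mul_eq_zero.mp h1 with h | h
    · have hl2 : l2 = 0 := pow_eq_zero_iff (n := 2) (by norm_num) |>.mp h
      subst hl2
      have h2 : l3 ^ 6 = 0 := by linear_combination (1/256 : ℂ) * hfib
      exact ⟨rfl, pow_eq_zero_iff (n := 6) (by norm_num) |>.mp h2⟩
    · have hl3 : l3 = 0 := pow_eq_zero_iff (n := 2) (by norm_num) |>.mp h
      subst hl3
      have h2 : l2 ^ 6 = 0 := by linear_combination (1/256 : ℂ) * hfib
      exact ⟨pow_eq_zero_iff (n := 6) (by norm_num) |>.mp h2, rfl⟩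
end

section
/- Let C, D be invertible 3×3 complex symmetric matrices and A an invertible 3×3 complex matrix. Write γ(C,D) = -σ₁₂(C,D)² + 4σ₀₃(C,D)·σ₂₁(C,D), where det(tC + D) = σ₃₀t³ + σ₂₁t² + σ₁₂t + σ₀₃. Then γ(AᵀCA, AᵀDA) = det(A)⁴·γ(C,D). In particular, γ(C,D) = 0 if and only if γ(AᵀCA, AᵀDA) = 0. -/
open Matrix

/-- The Cayley condition `γ(C,D) = -σ₁₂² + 4σ₀₃σ₂₁` transforms under simultaneous
congruence by `det(A)⁴`, hence the Cayley set is invariant under the `PGL₃(ℂ)` action. -/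
theorem cayley_condition_congruence_invariant
    (C D A : Matrix (Fin 3) (Fin 3) ℂ)
    (hC : Cᵀ = C) (hD : Dᵀ = D)
    (hCu : IsUnit C.det) (hDu : IsUnit D.det) (hAu : IsUnit A.det)
    (s30 s21 s12 s03 t30 t21 t12 t03 : ℂ)
    (hP : ∀ t : ℂ, (t • C + D).det = s30 * t ^ 3 + s21 * t ^ 2 + s12 * t + s03)
    (hP' : ∀ t : ℂ, (t • (Aᵀ * C * A) + Aᵀ * D * A).det
        = t30 * t ^ 3 + t21 * t ^ 2 + t12 * t + t03) :
    -t12 ^ 2 + 4 * t03 * t21 = A.det ^ 4 * (-s12 ^ 2 + 4 * s03 * s21) ∧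
      (-s12 ^ 2 + 4 * s03 * s21 = 0 ↔ -t12 ^ 2 + 4 * t03 * t21 = 0) := by
  have key : ∀ t : ℂ, t30 * t ^ 3 + t21 * t ^ 2 + t12 * t + t03
      = A.det ^ 2 * (s30 * t ^ 3 + s21 * t ^ 2 + s12 * t + s03) := by
    intro t
    have h1 : t • (Aᵀ * C * A) + Aᵀ * D * A = Aᵀ * (t • C + D) * A := by
      simp [Matrix.mul_add, Matrix.add_mul, Matrix.mul_smul, Matrix.smul_mul]
    have := hP' t
    rw [h1, Matrix.det_mul, Matrix.det_mul, Matrix.det_transpose, hP t] at this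
    rw [← this]; ring
  have e0 := key 0
  have e1 := key 1
  have e2 := key (-1)
  have e3 := key 2
  have h03 : t03 = A.det ^ 2 * s03 := by linear_combination e0
  have h12 : t12 = A.det ^ 2 * s12 := by linear_combination e1 - (1/3 : ℂ) * e2 - (1/6 : ℂ) * e3 - (1/2 : ℂ) * e0
  have h21 : t21 = A.det ^ 2 * s21 := by linear_combination (1/2 : ℂ) * e1 + (1/2 : ℂ) * e2 - e0
  have hmain : -t12 ^ 2 + 4 * t03 * t21 = A.det ^ 4 * (-s12 ^ 2 + 4 * s03 * s21) := by
    rw [h03, h12, h21]; ring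
  refine ⟨hmain, ?_, ?_⟩
  · intro h; rw [hmain, h, mul_zero]
  · intro h
    have hA4 : A.det ^ 4 ≠ 0 := pow_ne_zero _ hAu.ne_zero
    rw [hmain] at h
    exact (mul_eq_zero.mp h).resolve_left hA4
end
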